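/- arXiv:1007.1735 — 3 statements merged into one kernel-verified Lean document; each statement's English description precedes it below -/
import Mathlib

section
/- For positive integers B₁, T₁, T₂ and B₂ = αB₁ with integer α > 1, if max(B₂, T₁) + B₁ ≤ T₂ ≤ αT₁ + B₁, then (T₂ - B₁)/(T₂ - B₁ + B₂) ≤ T₁/(T₁ + B₁), with equality if and only if T₂ = αT₁ + B₁. -/
theorem musco_region_c_rate (B₁ T₁ T₂ B₂ α : ℕ) (hB₁ : 0 < B₁) (hT₁ : 0 < T₁)
    (hT₂ : 0 < T₂) (hα : 1 < α) (hB₂ : B₂ = α * B₁)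
    (hlo : max B₂ T₁ + B₁ ≤ T₂) (hhi : T₂ ≤ α * T₁ + B₁) :
    ((T₂ : ℚ) - B₁) / ((T₂ : ℚ) - B₁ + B₂) ≤ (T₁ : ℚ) / (T₁ + B₁) ∧
      (((T₂ : ℚ) - B₁) / ((T₂ : ℚ) - B₁ + B₂) = (T₁ : ℚ) / (T₁ + B₁) ↔
        T₂ = α * T₁ + B₁) := by
  have hB₂pos : 0 < B₂ := by subst hB₂; positivity
  have h1 : (B₂ : ℚ) + B₁ ≤ T₂ := by
    have : B₂ + B₁ ≤ T₂ := le_trans (by gcongr; exact le_max_left _ _) hlo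
    exact_mod_cast this
  have hB₁q : (0:ℚ) < B₁ := by exact_mod_cast hB₁
  have hT₁q : (0:ℚ) < T₁ := by exact_mod_cast hT₁
  have hB₂q : (0:ℚ) < B₂ := by exact_mod_cast hB₂pos
  have hB₂e : (B₂ : ℚ) = α * B₁ := by exact_mod_cast hB₂
  have hhiq : (T₂ : ℚ) ≤ α * T₁ + B₁ := by exact_mod_cast hhi
  have hden1 : (0:ℚ) < (T₂ : ℚ) - B₁ + B₂ := by linarith
  have hden2 : (0:ℚ) < (T₁ : ℚ) + B₁ := by linarith
  constructor
  · rw [div_le_div_iff₀ hden1 hden2]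
    nlinarith
  · rw [div_eq_div_iff hden1.ne' hden2.ne']
    constructor
    · intro h
      have : (T₂ : ℚ) = α * T₁ + B₁ := by
        have hα0 : (0:ℚ) < α := by positivity
        nlinarith
      exact_mod_cast this
    · intro h
      subst h
      push_cast
      rw [hB₂e]
      ring
end

section
/- Let B ≥ 1, T ≥ B, α ≥ 2 be integers and let Δ = T + B. Define the recursion of Lemma 1: the decoder recovers diagonal d^A_{i-B-k} at stage k using d^B_j for j ≤ i + (k-1)(α-1) - B - 1, and recovers d^B diagonals up to index i - B + k(α-1) - 1 at stage k. Then after stage k = T - B - 1, all d^A diagonals with indices in [i-T+1, i-1] and all d^B diagonals with indices in [i - B, i - B + (T-B-1)(α-1) - 1] have been recovered. -/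
/-- Index bookkeeping for the recursive decoder of Lemma 1: after stage `k = T - B - 1`,
the recovered `d^A` diagonals (the initial block `[i-B, i-1]` together with
`d^A_{i-B-k}` for `k = 1, …, T-B-1`) include all indices in the interval `[i-T+1, i-1]`,
and the recovered `d^B` diagonals (the blocks `[i-B+(k-1)(α-1), i-B+k(α-1)-1]` for
`k = 1, …, T-B-1`) include all indices in the interval `[i-B, i-B+(T-B-1)(α-1)-1]`. -/
theorem desco_recursion_coverage (B T α i : ℤ) (hB : 1 ≤ B) (hBT : B ≤ T)
    (hα : 1 < α) :
    Set.Icc (i - T + 1) (i - 1) ⊆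
      (Set.Icc (i - B) (i - 1) ∪
        ⋃ k ∈ Set.Icc (1 : ℤ) (T - B - 1), {i - B - k}) ∧
    Set.Icc (i - B) (i - B + (T - B - 1) * (α - 1) - 1) ⊆
      ⋃ k ∈ Set.Icc (1 : ℤ) (T - B - 1),
        Set.Icc (i - B + (k - 1) * (α - 1)) (i - B + k * (α - 1) - 1) := by
  constructor
  · intro x hx
    simp only [Set.mem_Icc] at hx
    by_cases h : i - B ≤ x
    · exact Or.inl (Set.mem_Icc.mpr ⟨h, hx.2⟩)
    · push_neg at h
      refine Or.inr ?_
      simp only [Set.mem_iUnion, Set.mem_Icc, Set.mem_singleton_iff]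
      exact ⟨i - B - x, ⟨by omega, by omega⟩, by ring⟩
  · intro x hx
    simp only [Set.mem_Icc] at hx
    have hα1 : (0:ℤ) < α - 1 := by omega
    set y := x - (i - B) with hy
    have hy0 : 0 ≤ y := by omega
    have hylt : y < (T - B - 1) * (α - 1) := by omega
    set k := y / (α - 1) + 1 with hk
    have h1 : (k - 1) * (α - 1) ≤ y := by
      have := Int.ediv_mul_le y (by omega : α - 1 ≠ 0)
      simpa [hk, mul_comm] using Int.ediv_mul_le y (by omega : α - 1 ≠ 0)
    have h2 : y < k * (α - 1) := by
      have := Int.lt_ediv_add_one_mul_self y hα1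
      simpa [hk] using this
    have hk1 : 1 ≤ k := by
      have : 0 ≤ y / (α - 1) := Int.ediv_nonneg hy0 (le_of_lt hα1)
      omega
    have hk2 : k ≤ T - B - 1 := by
      by_contra hcon
      push_neg at hcon
      have : (T - B - 1) * (α - 1) ≤ (k - 1) * (α - 1) :=
        mul_le_mul_of_nonneg_right (by omega) (le_of_lt hα1)
      omega
    simp only [Set.mem_iUnion, Set.mem_Icc]
    exact ⟨k, ⟨hk1, hk2⟩, by omega, by omega⟩
end

section
/- For integers B ≥ 1, T ≥ B, α ≥ 2 and k ∈ {1,…,T-B-1}: each diagonal d^B_m of code C₂ with m ∈ {i-B+(k-1)(α-1), …, i-B+k(α-1)-1} contains at most k entries at times ≥ i-B that are erased by a burst on [i-αB, i-1], and each such entry lies on some diagonal d^A_j with j ≥ i-B-(k-1). -/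
/-- Combinatorial core of induction step (Ind. 2) of Lemma 1: diagonal `d^B_m` of `C₂`
passes through sub-symbol `s_r` at time `m - (r-1)(α-1)` for `r = 1, …, T`.  For
`m ∈ [i-B+(k-1)(α-1), i-B+k(α-1)-1]`, at most `k` of its entries at times `≥ i-B` are
erased by a burst on `[i-αB, i-1]`, and each such entry lies on a main diagonal
`d^A_j` (with `j = t - (r-1)` for entry `s_r` at time `t`) with `j ≥ i-B-(k-1)`. -/
theorem desco_ind2_count (B T α i k m : ℤ) (hB : 1 ≤ B) (hBT : B ≤ T)
    (hα : 2 ≤ α) (hk : 1 ≤ k) (hk' : k ≤ T - B - 1)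
    (hm : i - B + (k - 1) * (α - 1) ≤ m) (hm' : m ≤ i - B + k * (α - 1) - 1) :
    ((Finset.Icc (1 : ℤ) T).filter
        (fun r => i - B ≤ m - (r - 1) * (α - 1) ∧ m - (r - 1) * (α - 1) ≤ i - 1)).card
      ≤ k.toNat ∧
    ∀ r ∈ Finset.Icc (1 : ℤ) T,
      i - B ≤ m - (r - 1) * (α - 1) → m - (r - 1) * (α - 1) ≤ i - 1 →
      i - B - (k - 1) ≤ m - (r - 1) * (α - 1) - (r - 1) := by
  have key : ∀ r : ℤ, i - B ≤ m - (r - 1) * (α - 1) → r ≤ k := by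
    intro r h
    by_contra hc
    push_neg at hc
    have h1 : k + 1 ≤ r := hc
    have h2 : k * (α - 1) ≤ (r - 1) * (α - 1) := by
      apply mul_le_mul_of_nonneg_right <;> linarith
    linarith
  constructor
  · calc ((Finset.Icc (1 : ℤ) T).filter _).card
        ≤ (Finset.Icc (1 : ℤ) k).card := by
          apply Finset.card_le_card
          intro r hr
          simp only [Finset.mem_filter, Finset.mem_Icc] at hr ⊢
          exact ⟨hr.1.1, key r hr.2.1⟩
    _ = k.toNat := by rw [Int.card_Icc]; omega
  · intro r hr h1 h2
    have := key r h1
    simp only [Finset.mem_Icc] at hr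
    linarith
end
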